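/- arXiv:2305.10078 — 4 statements merged into one kernel-verified Lean document; each statement's English description precedes it below -/
import Mathlib

section
/- Let Λ = U ⊕ Σ(2) where Σ is an even lattice and Σ(2) denotes Σ with bilinear form doubled, with standard hyperbolic basis {e,f} of U. Let b ∈ Σ(2) be a nonzero primitive vector. Then the Eichler transformation E_b is not a product of reflections s_v with q(v) = ±1 in Λ⊗ℤ₂ considerations; concretely: for every v ∈ Λ with (v,v) = ±2, the reflection s_v satisfies s_v(e − f) ≡ e − f (mod 2Λ), whereas E_b(e − f) ≡ e − f + b (mod 2Λ) with b ∉ 2Λ. -/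
/-- The pairing on `Λ = U ⊕ Σ(2)`: `(r, s, z)` denotes `r·e + s·f + z` where `{e,f}` is the
standard hyperbolic basis and the form on the `Σ`-part is the doubled form `2·B`. -/
def pairU2 {M : Type*} [AddCommGroup M] [Module ℤ M] (B : M →ₗ[ℤ] M →ₗ[ℤ] ℤ)
    (x y : ℤ × ℤ × M) : ℤ :=
  x.1 * y.2.1 + y.1 * x.2.1 + 2 * B x.2.2 y.2.2

/-- The reflection `s_v(x) = x − (x,v)·q(v)⁻¹·v` around a vector `v` with
`q(v) = (v,v)/2 = ±1` in `Λ = U ⊕ Σ(2)` (note `q(v)⁻¹ = q(v)` when `q(v) = ±1`). -/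
def reflU2 {M : Type*} [AddCommGroup M] [Module ℤ M] (B : M →ₗ[ℤ] M →ₗ[ℤ] ℤ)
    (v : ℤ × ℤ × M) : ℤ × ℤ × M → ℤ × ℤ × M :=
  fun x => x - (pairU2 B x v * (pairU2 B v v / 2)) • v

/-- The Eichler transformation `E_b` on `Λ = U ⊕ Σ(2)`; here `q_{Σ(2)}(b) = B b b`. -/
def eichlerU2 {M : Type*} [AddCommGroup M] [Module ℤ M] (B : M →ₗ[ℤ] M →ₗ[ℤ] ℤ)
    (b : M) : ℤ × ℤ × M → ℤ × ℤ × M :=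
  fun x => (-(2 * B b x.2.2) + x.1 - B b b * x.2.1, x.2.1, x.2.2 + x.2.1 • b)

/-- in `Λ = U ⊕ Σ(2)` with `b ∈ Σ(2)` nonzero primitive:
for every `v ∈ Λ` with `(v,v) = ±2` the reflection `s_v` satisfies
`s_v(e − f) ≡ e − f (mod 2Λ)`, whereas `E_b(e − f) ≡ e − f + b (mod 2Λ)` with `b ∉ 2Λ`. -/
theorem stmt_4 (M : Type*) [AddCommGroup M] [Module ℤ M]
    (B : M →ₗ[ℤ] M →ₗ[ℤ] ℤ)
    (hsymm : ∀ z w, B z w = B w z) (heven : ∀ z, Even (B z z))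
    (b : M) (hb0 : b ≠ 0)
    (hprim : ∀ (m : ℤ) (z : M), b = m • z → IsUnit m) :
    (∀ v : ℤ × ℤ × M, pairU2 B v v = 2 ∨ pairU2 B v v = -2 →
      ∃ w : ℤ × ℤ × M,
        reflU2 B v (1, -1, 0) - ((1, -1, 0) : ℤ × ℤ × M) = (2 : ℤ) • w) ∧
    (∃ w : ℤ × ℤ × M,
      eichlerU2 B b (1, -1, 0) - (((1, -1, 0) : ℤ × ℤ × M) + (0, 0, b)) = (2 : ℤ) • w) ∧
    ¬ ∃ z : M, b = (2 : ℤ) • z := by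

  refine ⟨?_, ?_, ?_⟩
  · rintro ⟨v1, v2, vm⟩ hv
    have hq : v1 * v2 + B vm vm = 1 ∨ v1 * v2 + B vm vm = -1 := by
      rcases hv with h | h <;> [left; right] <;>
        simp only [pairU2] at h <;> omega
    obtain ⟨k, hk⟩ := heven vm
    have hodd : Odd (v1 * v2) := by
      rcases hq with h | h
      exacts [⟨-k, by omega⟩, ⟨-k - 1, by omega⟩]
    obtain ⟨a, ha⟩ := (Int.odd_mul.mp hodd).1
    obtain ⟨c, hc⟩ := (Int.odd_mul.mp hodd).2
    have hdiv : pairU2 B (v1,v2,vm) (v1,v2,vm) / 2 = 1 ∨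
        pairU2 B (v1,v2,vm) (v1,v2,vm) / 2 = -1 := by
      rcases hv with h | h <;> [left; right] <;> rw [h] <;> decide
    have hpx : pairU2 B (1, -1, 0) (v1, v2, vm) = v2 - v1 := by
      simp [pairU2]; ring
    obtain ⟨m, hm⟩ : ∃ m : ℤ,
        pairU2 B (1, -1, 0) (v1, v2, vm) * (pairU2 B (v1,v2,vm) (v1,v2,vm) / 2) = 2 * m := by
      rcases hdiv with h | h <;> rw [hpx, h]
      exacts [⟨c - a, by omega⟩, ⟨a - c, by omega⟩]
    refine ⟨(-(m * v1), -(m * v2), (-m) • vm), ?_⟩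
    simp only [reflU2, hm, Prod.smul_mk, Prod.mk_sub_mk, smul_eq_mul]
    refine Prod.ext ?_ (Prod.ext ?_ ?_)
    · simp; ring
    · simp; ring
    · show (0 : M) - (2 * m) • vm - 0 = (2 : ℤ) • (-m) • vm
      rw [← mul_zsmul']
      have h2 : -m * 2 = -(2 * m) := by ring
      rw [h2, neg_zsmul]
      abel
  · obtain ⟨k, hk⟩ := heven b
    refine ⟨(k, 0, -b), ?_⟩
    simp only [eichlerU2, Prod.smul_mk, Prod.mk_sub_mk, Prod.mk_add_mk, smul_eq_mul]
    refine Prod.ext ?_ (Prod.ext ?_ ?_)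
    · simp; omega
    · simp
    · simp [two_smul]; abel
  · rintro ⟨z, hz⟩
    have := hprim 2 z hz
    rw [Int.isUnit_iff] at this
    omega
end

section
/- Let V be a quadratic space over ℚ and b₁,…,b_{2n} anisotropic vectors such that the product of reflections s_{b₁}∘⋯∘s_{b_{2n}} has spinor norm ±1 in ℚ^×/(ℚ^×)², i.e. ∏_{i=1}^{2n} q(b_i) = ±k² for some k ∈ ℚ^×. Then there exist vectors c₁,…,c_{2n} (each a scalar multiple of the corresponding b_i, hence in the same lattice if the b_i lie in a lattice) with s_{b₁}∘⋯∘s_{b_{2n}} = s_{c₁}∘⋯∘s_{c_{2n}} and ∏_{i=1}^{n} q(c_{2i−1}) = ± ∏_{i=1}^{n} q(c_{2i}). -/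
/-- The reflection `s_v(x) = x − (x,v)·q(v)⁻¹·v` (with `q(v) = (v,v)/2`) in a rational
quadratic space with bilinear form `B`. -/
def reflQ {V : Type*} [AddCommGroup V] [Module ℚ V] (B : V →ₗ[ℚ] V →ₗ[ℚ] ℚ)
    (v : V) : V → V :=
  fun x => x - (B x v / (B v v / 2)) • v

/-- Composition of a list of maps (first element applied last). -/
def compList {V : Type*} (l : List (V → V)) : V → V :=
  l.foldr (· ∘ ·) id

/-!
Only the first vector needs rescaling. Counting indices from `0`, write
`∏ q(bᵢ) = P_even · P_odd = ±k²`. Replacing `b₀` by `λ b₀` with `λ = P_odd / k` leaves `s_{b₀}`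
unchanged and multiplies `P_even` by `λ²`, and `λ² P_even = P_odd (P_even P_odd) / k² = ± P_odd`.
-/

theorem Fin.prod_univ_eq_prod_even_mul_prod_odd {M : Type*} [CommMonoid M] (n : ℕ)
    (g : Fin (2 * n) → M) :
    ∏ i, g i = (∏ i : Fin n, g ⟨2 * i.1, by omega⟩) * ∏ i : Fin n, g ⟨2 * i.1 + 1, by omega⟩ := by
  rw [← Equiv.prod_comp ((finProdFinEquiv (m := n) (n := 2)).trans (finCongr (mul_comm n 2))) g,
    Fintype.prod_prod_type, ← Finset.prod_mul_distrib]
  refine Finset.prod_congr rfl fun i _ => ?_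
  rw [Fin.prod_univ_two]
  congr 1 <;> exact congrArg g (Fin.ext (by simp <;> omega))

section Reflection

variable {V : Type*} [AddCommGroup V] [Module ℚ V] (B : V →ₗ[ℚ] V →ₗ[ℚ] ℚ)

theorem reflQ_smul {v : V} {l : ℚ} (hl : l ≠ 0) (hv : B v v ≠ 0) :
    reflQ B (l • v) = reflQ B v := by
  funext x
  simp only [reflQ, map_smul, LinearMap.smul_apply, smul_smul, smul_eq_mul]
  congr 2
  field_simp

theorem compList_reflQ_smul {m : ℕ} (b : Fin m → V) (hb : ∀ i, B (b i) (b i) ≠ 0)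
    {l : Fin m → ℚ} (hl : ∀ i, l i ≠ 0) :
    compList (List.ofFn fun i => reflQ B (l i • b i)) = compList (List.ofFn fun i => reflQ B (b i)) := by
  simp only [reflQ_smul B (hl _) (hb _)]

theorem half_apply_smul_self (v : V) (l : ℚ) : B (l • v) (l • v) / 2 = l ^ 2 * (B v v / 2) := by
  simp only [map_smul, LinearMap.smul_apply, smul_eq_mul]
  ring

end Reflection

theorem sq_div_mul_eq_or_eq_neg {P Q k : ℚ} (hQ : Q ≠ 0) (hk : k ≠ 0)
    (h : P * Q = k ^ 2 ∨ P * Q = -k ^ 2) : (Q / k) ^ 2 * P = Q ∨ (Q / k) ^ 2 * P = -Q := by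
  rcases h with h | h
  · left; field_simp; linear_combination h
  · right; field_simp; linear_combination h

/-- if `b₁, …, b_{2n}` are anisotropic vectors of a non-degenerate rational
quadratic space whose product of reflections has spinor norm `±1`
(i.e. `∏ q(bᵢ) = ±k²`), then there are rescalings `cᵢ = λᵢ·bᵢ` with the same product
of reflections and `∏_{i=1}^{n} q(c_{2i−1}) = ± ∏_{i=1}^{n} q(c_{2i})`. -/
theorem stmt_5 (V : Type*) [AddCommGroup V] [Module ℚ V]
    (B : V →ₗ[ℚ] V →ₗ[ℚ] ℚ)
    (n : ℕ) (b : Fin (2 * n) → V)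
    (hb : ∀ i, B (b i) (b i) ≠ 0)
    (k : ℚ) (hk : k ≠ 0)
    (hspin : (∏ i, B (b i) (b i) / 2) = k ^ 2 ∨ (∏ i, B (b i) (b i) / 2) = -k ^ 2) :
    ∃ c : Fin (2 * n) → V,
      (∀ i, ∃ l : ℚ, l ≠ 0 ∧ c i = l • b i) ∧
      compList (List.ofFn fun i => reflQ B (b i)) = compList (List.ofFn fun i => reflQ B (c i)) ∧
      ((∏ i : Fin n, B (c ⟨2 * i.1, by have := i.isLt; omega⟩) (c ⟨2 * i.1, by have := i.isLt; omega⟩) / 2)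
          = (∏ i : Fin n, B (c ⟨2 * i.1 + 1, by have := i.isLt; omega⟩) (c ⟨2 * i.1 + 1, by have := i.isLt; omega⟩) / 2)
        ∨ (∏ i : Fin n, B (c ⟨2 * i.1, by have := i.isLt; omega⟩) (c ⟨2 * i.1, by have := i.isLt; omega⟩) / 2)
          = -(∏ i : Fin n, B (c ⟨2 * i.1 + 1, by have := i.isLt; omega⟩) (c ⟨2 * i.1 + 1, by have := i.isLt; omega⟩) / 2)) := by
  cases n with
  | zero =>
    exact ⟨b, fun i => ⟨1, one_ne_zero, (one_smul ℚ _).symm⟩, rfl, Or.inl rfl⟩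
  | succ m =>
    set P_odd := ∏ i : Fin (m + 1), B (b ⟨2 * i.1 + 1, by omega⟩) (b ⟨2 * i.1 + 1, by omega⟩) / 2
    have hP_odd : P_odd ≠ 0 := Finset.prod_ne_zero_iff.2 fun i _ => div_ne_zero (hb _) two_ne_zero
    set l : Fin (2 * (m + 1)) → ℚ := fun i => if i.1 = 0 then P_odd / k else 1
    have hl : ∀ i, l i ≠ 0 := fun i => by
      dsimp only [l]
      split_ifs
      exacts [div_ne_zero hP_odd hk, one_ne_zero]
    refine ⟨fun i => l i • b i, fun i => ⟨l i, hl i, rfl⟩,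
      (compList_reflQ_smul B b hb hl).symm, ?_⟩
    have hl_even : ∏ i : Fin (m + 1), l ⟨2 * i.1, by omega⟩ ^ 2 = (P_odd / k) ^ 2 := by
      rw [Finset.prod_eq_single 0 (fun i _ hi => ?_) (by simp)]
      · simp [l]
      · have : 2 * i.1 ≠ 0 := by have := Fin.val_ne_zero_iff.mpr hi; omega
        simp only [l, if_neg this, one_pow]
    have hl_odd : ∏ i : Fin (m + 1), l ⟨2 * i.1 + 1, by omega⟩ ^ 2 = 1 := by simp [l]
    simp only [half_apply_smul_self, Finset.prod_mul_distrib, hl_even, hl_odd, one_mul]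
    exact sq_div_mul_eq_or_eq_neg hP_odd hk
      (by rwa [Fin.prod_univ_eq_prod_even_mul_prod_odd] at hspin)
end

section
/- Let N be an even non-degenerate lattice such that every sublattice of positive rank has even determinant (equivalently, rank₂(N) = 0 where rank₂ is the maximal rank of a sublattice of odd determinant). Then all pairwise pairings in N are even, i.e. there exists a lattice M with N ≅ M(2). -/
open Matrix

/-- let `N` be an even non-degenerate lattice (here `ℤⁿ` with Gram matrix `G`)
such that every sublattice of positive rank has even determinant (i.e. `rank₂(N) = 0`).
Then all pairings in `N` are even; equivalently, `N ≅ M(2)` for some lattice `M`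
(i.e. `G = 2·M` for an integral matrix `M`). -/
theorem stmt_7 (n : ℕ) (G : Matrix (Fin n) (Fin n) ℤ)
    (hsymm : G.IsSymm) (heven : ∀ i, Even (G i i)) (hdet : G.det ≠ 0)
    (h : ∀ r : ℕ, 0 < r → ∀ v : Fin r → (Fin n → ℤ),
      Even ((Matrix.of fun i j : Fin r => v i ⬝ᵥ (G *ᵥ v j)).det)) :
    (∀ x y : Fin n → ℤ, Even (x ⬝ᵥ (G *ᵥ y))) ∧
    ∃ M : Matrix (Fin n) (Fin n) ℤ, G = 2 • M := by
  have key : ∀ i j, Even (G i j) := by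
    intro i j
    by_cases hij : i = j
    · subst hij; exact heven i
    · have h2 := h 2 (by norm_num) ![Pi.single i 1, Pi.single j 1]
      have hentry : ∀ a b : Fin n,
          (Pi.single a 1 : Fin n → ℤ) ⬝ᵥ (G *ᵥ Pi.single b 1) = G a b := by
        intro a b
        simp [mulVec_single, Pi.single_apply, dotProduct]
      rw [Matrix.det_fin_two] at h2
      simp only [Matrix.of_apply, Matrix.cons_val_zero, Matrix.cons_val_one,
        Matrix.head_cons, hentry] at h2
      have hji : G j i = G i j := by
        have := hsymm
        rw [Matrix.IsSymm] at this
        calc G j i = Gᵀ i j := rfl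
        _ = G i j := by rw [this]
      rw [hji] at h2
      have h3 : Even (G i j * G i j) := by
        obtain ⟨a, ha⟩ := h2
        obtain ⟨b, hb⟩ := heven i
        exact ⟨b * G j j - a, by linear_combination (G j j) * hb - ha⟩
      rcases Int.even_mul.mp h3 with h4 | h4 <;> exact h4
  have hM : ∃ M : Matrix (Fin n) (Fin n) ℤ, G = 2 • M := by
    refine ⟨Matrix.of fun i j => G i j / 2, ?_⟩
    ext i j
    obtain ⟨k, hk⟩ := key i j
    simp only [two_smul, Matrix.add_apply, Matrix.of_apply]
    omega
  refine ⟨?_, hM⟩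
  intro x y
  obtain ⟨M, hMeq⟩ := hM
  rw [hMeq]
  have : x ⬝ᵥ ((2 • M) *ᵥ y) = 2 * (x ⬝ᵥ (M *ᵥ y)) := by
    simp [Matrix.smul_mulVec, dotProduct_smul, two_smul, two_mul,
      Matrix.add_mulVec, dotProduct_add]
  rw [this]
  exact even_two_mul _
end

section
/- Let Λ = U ⊕ Σ be an even lattice with standard hyperbolic basis {e,f}, and let a = ne + mf ∈ U with q(a) = nm a unit (in the relevant base ring A, ℤ or ℤ_p). Then for any b ∈ Σ, the conjugation s_a ∘ ψ_b ∘ s_a equals ψ_{−(m/n)b, e−f} := s_{e−f} ∘ ψ_{−(m/n)b} ∘ s_{e−f}, where ψ_c(re+sf+z) = ((c,z) − r + q(c)s)e − sf + z + sc. Explicitly, s_a ∘ ψ_b ∘ s_a (re+sf+z) = ((−(m/n)b, z) − s + (m²/n²)q(b)r) f − re + z − r(m/n)b. -/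
/-- The pairing on `Λ = U ⊕ Σ` over a base ring `R` (`R = ℤ` or `ℤ_p`): `(r, s, z)`
denotes `r·e + s·f + z`, `{e,f}` the standard hyperbolic basis, `B` the form of `Σ`. -/
def pairUR {R M : Type*} [CommRing R] [AddCommGroup M] [Module R M]
    (B : M →ₗ[R] M →ₗ[R] R) (x y : R × R × M) : R :=
  x.1 * y.2.1 + y.1 * x.2.1 + B x.2.2 y.2.2

/-- The Huybrechts involution `ψ_c(re + sf + z) = ((c,z) − r + q(c)s)e − sf + z + sc`,
with `qc = q(c)`. -/
def psiUR {R M : Type*} [CommRing R] [AddCommGroup M] [Module R M]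
    (B : M →ₗ[R] M →ₗ[R] R) (c : M) (qc : R) : R × R × M → R × R × M :=
  fun x => (B c x.2.2 - x.1 + qc * x.2.1, -x.2.1, x.2.2 + x.2.1 • c)

/-- The reflection `s_v(x) = x − (x,v)·q(v)⁻¹·v`, where `qinv` is the inverse of `q(v)`. -/
def reflUR {R M : Type*} [CommRing R] [AddCommGroup M] [Module R M]
    (B : M →ₗ[R] M →ₗ[R] R) (v : R × R × M) (qinv : R) : R × R × M → R × R × M :=
  fun x => x - (pairUR B x v * qinv) • v

/-- let `a = n·e + m·f ∈ U` with `q(a) = nm` a unit (with inverse `u`) and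
`n` a unit (with inverse `ninv`). Then for `b ∈ Σ`, the conjugation `s_a ∘ ψ_b ∘ s_a`
equals `ψ_{−(m/n)b, e−f} = s_{e−f} ∘ ψ_{−(m/n)b} ∘ s_{e−f}`; explicitly,
`s_a ∘ ψ_b ∘ s_a (re + sf + z) = ((−(m/n)b, z) − s + (m²/n²)q(b)r)·f − r·e + z − r(m/n)b`.
(Note `q(e−f) = −1` so `s_{e−f}` uses `qinv = −1`, and `q(−(m/n)b) = (m²/n²)q(b)`.) -/
theorem stmt_10 (R : Type*) [CommRing R] (M : Type*) [AddCommGroup M] [Module R M]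
    (B : M →ₗ[R] M →ₗ[R] R)
    (hsymm : ∀ z w, B z w = B w z)
    (b : M) (qb : R) (hqb : 2 * qb = B b b)
    (n m u ninv : R) (hu : n * m * u = 1) (hninv : n * ninv = 1) :
    (∀ (r s : R) (z : M),
      reflUR B (n, m, 0) u (psiUR B b qb (reflUR B (n, m, 0) u (r, s, z)))
        = (-r, B (-(m * ninv) • b) z - s + (m * ninv) * (m * ninv) * qb * r,
            z + r • (-(m * ninv) • b))) ∧
    (∀ x, reflUR B (n, m, 0) u (psiUR B b qb (reflUR B (n, m, 0) u x))
        = reflUR B (1, -1, 0) (-1)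
            (psiUR B (-(m * ninv) • b) ((m * ninv) * (m * ninv) * qb)
              (reflUR B (1, -1, 0) (-1) x))) := by
  have key : ∀ (r s : R) (z : M),
      reflUR B (n, m, 0) u (psiUR B b qb (reflUR B (n, m, 0) u (r, s, z)))
        = (-r, B (-(m * ninv) • b) z - s + (m * ninv) * (m * ninv) * qb * r,
            z + r • (-(m * ninv) • b)) := by
    have hmu : ninv = m * u := by
      calc ninv = (n * m * u) * ninv := by rw [hu]; ring
      _ = m * u * (n * ninv) := by ring
      _ = m * u := by rw [hninv]; ring
    intro r s z
    subst hmu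
    simp only [reflUR, psiUR, pairUR, Prod.ext_iff, Prod.mk_sub_mk, Prod.fst_sub, Prod.snd_sub,
      map_zero, LinearMap.zero_apply, map_add, map_smul, map_sub, smul_eq_mul, smul_zero,
      LinearMap.smul_apply, Prod.smul_mk, Prod.mk_add_mk, sub_zero, mul_zero, add_zero, zero_mul]
    refine ⟨?_, ?_, ?_⟩
    · linear_combination (-(B b z) - 2*r*n*m*u + r*m^2*u*qb + s*qb*(n*m*u - 1)
        - 2*s*n^2*u) * hu
    · linear_combination (-2*s*n*m*u + s*m^2*u*qb - 2*r*m^2*u) * hu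
    · match_scalars <;> first | ring1 | linear_combination (-s) * hu | linear_combination s * hu
  have key2 : ∀ (c : M) (qc : R) (r s : R) (z : M),
      reflUR B (1, -1, 0) (-1) (psiUR B c qc (reflUR B (1, -1, 0) (-1) (r, s, z)))
        = (-r, B c z - s + qc * r, z + r • c) := by
    intro c qc r s z
    simp only [reflUR, psiUR, pairUR, Prod.ext_iff, Prod.mk_sub_mk, Prod.fst_sub, Prod.snd_sub,
      map_zero, LinearMap.zero_apply, map_add, map_smul, map_sub, smul_eq_mul, smul_zero,
      LinearMap.smul_apply, Prod.smul_mk, Prod.mk_add_mk, sub_zero, mul_zero, add_zero, zero_mul]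
    refine ⟨by ring, by ring, ?_⟩
    match_scalars <;> ring
  refine ⟨key, ?_⟩
  rintro ⟨r, s, z⟩
  rw [key r s z, key2]
end
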